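/- Let C, γ be strictly convex, increasing, differentiable, γ(0)=0, E^c > 0. Suppose at prices (λ_i, {λ_j}) the Case 6 conditions hold: λ_i > C'(0), S* = {j : λ_j < λ_i - γ'(0)} ≠ ∅, and λ_i > C'(E^c - Σ_{j∈S*} Γ(λ_i - λ_j)). Further suppose the price identities λ_i = C'(E^g) with E^g = χ(λ_i) and λ_j = λ_i - γ'(E_{j,i}) for j ∈ S*, where E_{j,i} = Γ(λ_i - λ_j) > 0. Then the resulting net expenditure C(E^c + E₀) - C'(E^c + E₀)E₀ + Σ_{j∈S*} (γ(E_{j,i}) - γ'(E_{j,i})E_{j,i}), with E₀ = E^s - Σ_{j∈S*} E_{j,i}, is strictly less than C(E^c). In particular, trading strictly reduces the microgrid's cost in Case 6. -/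

import Mathlib

/-!
Both pieces of the net expenditure lie below a tangent line. The tangent to `C` at `Eᵍ`,
evaluated at `Eᶜ`, gives `C(Eᵍ) - C'(Eᵍ)(Eᵍ - Eᶜ) ≤ C(Eᶜ)`. The tangent to `γ` at
`E_{j,i} ≠ 0`, evaluated at `0`, gives `γ(E_{j,i}) - γ'(E_{j,i}) E_{j,i} < γ 0 = 0`, and
`S*` is nonempty, so the transport terms make the inequality strict.
-/

open Set Finset

lemma ConvexOn.add_deriv_mul_sub_le {S : Set ℝ} {f : ℝ → ℝ} {x y : ℝ}
    (hf : ConvexOn ℝ S f) (hx : x ∈ S) (hy : y ∈ S) (hd : DifferentiableAt ℝ f x) :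
    f x + deriv f x * (y - x) ≤ f y := by
  rcases lt_trichotomy x y with hxy | rfl | hxy
  · have hslope := hf.deriv_le_slope hx hy hxy hd
    rw [slope_def_field, le_div_iff₀ (sub_pos.2 hxy)] at hslope
    linarith
  · simp
  · have hslope := hf.slope_le_deriv hy hx hxy hd
    rw [slope_def_field, div_le_iff₀ (sub_pos.2 hxy)] at hslope
    linarith

lemma StrictConvexOn.add_deriv_mul_sub_lt {S : Set ℝ} {f : ℝ → ℝ} {x y : ℝ}
    (hf : StrictConvexOn ℝ S f) (hx : x ∈ S) (hy : y ∈ S) (hd : DifferentiableAt ℝ f x)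
    (hxy : x ≠ y) :
    f x + deriv f x * (y - x) < f y := by
  rcases hxy.lt_or_gt with hxy | hxy
  · have hslope := hf.deriv_lt_slope hx hy hxy hd
    rw [slope_def_field, lt_div_iff₀ (sub_pos.2 hxy)] at hslope
    linarith
  · have hslope := hf.slope_lt_deriv hy hx hxy hd
    rw [slope_def_field, div_lt_iff₀ (sub_pos.2 hxy)] at hslope
    linarith

lemma StrictConvexOn.sub_deriv_mul_self_neg {S : Set ℝ} {f : ℝ → ℝ} {x : ℝ}
    (hf : StrictConvexOn ℝ S f) (h0 : (0 : ℝ) ∈ S) (hf0 : f 0 = 0) (hx : x ∈ S)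
    (hd : DifferentiableAt ℝ f x) (hx0 : x ≠ 0) :
    f x - deriv f x * x < 0 := by
  have htangent := hf.add_deriv_mul_sub_lt hx h0 hd hx0
  rw [hf0] at htangent
  linarith

/-- `g` is the generated energy `Eᵍ` and `B j` the energy `E_{j,i}` bought from `j`,
so `g - Ec` is `E₀`. -/
theorem case6_trading_strictly_beneficial_general
    {ι : Type*} [Fintype ι]
    (C γ : ℝ → ℝ)
    (hCconv : StrictConvexOn ℝ Set.univ C)
    (hCdiff : Differentiable ℝ C)
    (hγconv : StrictConvexOn ℝ Set.univ γ)
    (hγdiff : Differentiable ℝ γ) (hγ0 : γ 0 = 0)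
    (Ec : ℝ)
    (lamI : ℝ) (lam : ι → ℝ)
    (hSne : ∃ j, lam j < lamI - deriv γ 0)
    (g : ℝ)
    (B : ι → ℝ)
    (hB : ∀ j, lam j < lamI - deriv γ 0 →
        lam j = lamI - deriv γ (B j) ∧ 0 < B j) :  -- price identities λⱼ = λᵢ - γ'(E_{j,i})
    C (Ec + (g - Ec)) - deriv C (Ec + (g - Ec)) * (g - Ec) +
        ∑ j ∈ Finset.univ.filter (fun j => lam j < lamI - deriv γ 0),
          (γ (B j) - deriv γ (B j) * B j) <
      C Ec := by
  set Sstar := Finset.univ.filter (fun j => lam j < lamI - deriv γ 0)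
  rw [add_sub_cancel]
  have hgeneration : C g - deriv C g * (g - Ec) ≤ C Ec := by
    linarith [hCconv.convexOn.add_deriv_mul_sub_le (mem_univ g) (mem_univ Ec) (hCdiff g)]
  have htransport : ∑ j ∈ Sstar, (γ (B j) - deriv γ (B j) * B j) < 0 := by
    refine sum_neg (fun j hj => ?_) ?_
    · have hBpos := (hB j (mem_filter.1 hj).2).2
      exact hγconv.sub_deriv_mul_self_neg (mem_univ 0) hγ0 (mem_univ _) (hγdiff _) hBpos.ne'
    · obtain ⟨j, hj⟩ := hSne
      exact ⟨j, mem_filter.2 ⟨Finset.mem_univ j, hj⟩⟩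
  linarith

/-- In Case 6, trading strictly reduces the microgrid's cost: the net expenditure
is strictly less than the stand-alone cost `C(Eᶜ)`. Here `g = χ(λᵢ)` is the
generated energy, `B j = Γ(λᵢ - λⱼ)` the bought energies, and `E₀ = g - Eᶜ`. -/
theorem case6_trading_strictly_beneficial
    {ι : Type*} [Fintype ι]
    (C γ : ℝ → ℝ)
    (hCconv : StrictConvexOn ℝ Set.univ C) (hCmono : StrictMono C)
    (hCdiff : Differentiable ℝ C)
    (hγconv : StrictConvexOn ℝ Set.univ γ) (hγmono : StrictMono γ)
    (hγdiff : Differentiable ℝ γ) (hγ0 : γ 0 = 0)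
    (Ec : ℝ) (hEc : 0 < Ec)
    (lamI : ℝ) (lam : ι → ℝ)
    (hlamI : lamI > deriv C 0)
    (hSne : ∃ j, lam j < lamI - deriv γ 0)
    (g : ℝ) (hg : deriv C g = lamI)  -- price identity λᵢ = C'(Eᵍ), g = χ(λᵢ)
    (B : ι → ℝ)
    (hB : ∀ j, lam j < lamI - deriv γ 0 →
        lam j = lamI - deriv γ (B j) ∧ 0 < B j)  -- price identities λⱼ = λᵢ - γ'(E_{j,i})
    (hgen : lamI > deriv C (Ec - ∑ j ∈ Finset.univ.filter
        (fun j => lam j < lamI - deriv γ 0), B j)) :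
    C (Ec + (g - Ec)) - deriv C (Ec + (g - Ec)) * (g - Ec) +
        ∑ j ∈ Finset.univ.filter (fun j => lam j < lamI - deriv γ 0),
          (γ (B j) - deriv γ (B j) * B j) <
      C Ec :=
  case6_trading_strictly_beneficial_general C γ hCconv hCdiff hγconv hγdiff hγ0 Ec lamI lam hSne g B
    hB
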